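/- Suppose an instance of MinConCD satisfies: (1) M_ℓ ≥ a|C_ℓ| for all ℓ ∈ [k] and some constant a ∈ (0,1]; (2) Δ + 1 ≤ min_ℓ d|C_ℓ|/ln n with d ≤ a²/576; and (3) k ≤ n/4, and suppose the LP relaxation is feasible with optimal fractional cost B. Perform 4·ln n independent rounds, each assigning every tag j ∈ T independently to cluster ℓ with probability x*_ℓ(j)/2 and to no cluster otherwise, and accept the first round whose output X = (X_1,...,X_k) satisfies Z_ℓ ≥ M_ℓ/8 for all ℓ and ∑_ℓ|X_ℓ| ≤ 2B. Then with probability at least 1 − 1/n some round is accepted, i.e., the procedure returns pairwise disjoint descriptors X_1,...,X_k covering at least M_ℓ/8 objects in each cluster C_ℓ at total cost at most 2B. -/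

import Mathlib

/-!
One round puts each tag independently into cluster `ℓ` with probability `x ℓ j / 2`. Its expected
cost is `B / 2`, so by Markov's inequality the cost exceeds `2 B` with probability at most `1 / 4`.
An object `i` of `C ℓ` is covered with probability `p i ≥ z i / 4`, so the expected coverage `μ` of
`C ℓ` is at least `M ℓ / 4`. The coverage indicators are dependent, but a greedy `(Δ + 1)`-colouring
of the graph of objects sharing a tag splits `C ℓ` into classes with pairwise disjoint tag sets,
inside which they are independent. Hölder's inequality over the classes gives the Chernoff bound
`E[2 ^ (-Z / (Δ + 1))] ≤ exp (-μ / (2 (Δ + 1)))` for the coverage `Z`, and the size condition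
`576 (Δ + 1) ln n ≤ M ℓ`, which follows from (1) and (2), turns it into `P(Z < M ℓ / 8) ≤ n⁻²`.
A union bound over the cost and the `k ≤ n / 4` clusters makes a round fail with probability at
most `1 / 2`, and `R ≥ 4 ln n` independent rounds all fail with probability at most `2⁻ᴿ ≤ 1 / n`.
-/

open scoped BigOperators Classical

open Finset Real

lemma prod_add_mul_prod_eq_sum_powerset {ι T : Type*} {V : Finset ι} {t : ι → Finset T}
    (ht : (V : Set ι).PairwiseDisjoint t) (a b : ℝ) (F : T → ℝ) :
    ∏ i ∈ V, (a + b * ∏ j ∈ t i, F j) =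
      ∑ U ∈ V.powerset, a ^ #U * b ^ #(V \ U) * ∏ j ∈ (V \ U).biUnion t, F j := by
  rw [prod_add]
  refine sum_congr rfl fun U _ => ?_
  rw [prod_const, prod_mul_distrib, prod_const, prod_biUnion (ht.subset (by simp))]
  ring

lemma prod_le_sum_pow_div {m : ℕ} (hm : 0 < m) (y : Fin m → ℝ) (hy : ∀ c, 0 ≤ y c) :
    ∏ c, y c ≤ (∑ c, y c ^ m) / m := by
  have hm' : (m : ℝ) ≠ 0 := by positivity
  have := geom_mean_le_arith_mean_weighted univ (fun _ => (m : ℝ)⁻¹) (fun c => y c ^ m)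
    (fun _ _ => by positivity) (by simp [hm']) (fun c _ => pow_nonneg (hy c) m)
  simpa [pow_rpow_inv_natCast (hy _) hm.ne', ← mul_sum, div_eq_inv_mul] using this

/-- Hölder's inequality for `m` factors, proved by AM-GM after rescaling the `c`-th factor by
`exp (a c / m)`. -/
lemma sum_mul_prod_le_exp_of_sum_mul_pow_le {Ω : Type*} [Fintype Ω] {m : ℕ} (hm : 0 < m)
    {q : Ω → ℝ} (hq : ∀ ω, 0 ≤ q ω) {g : Fin m → Ω → ℝ} (hg : ∀ c ω, 0 ≤ g c ω) {a : Fin m → ℝ}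
    (hga : ∀ c, ∑ ω, q ω * g c ω ^ m ≤ exp (-a c)) :
    ∑ ω, q ω * ∏ c, g c ω ≤ exp (-(∑ c, a c) / m) := by
  have hm' : (m : ℝ) ≠ 0 := by positivity
  have hpt : ∀ ω, exp ((∑ c, a c) / m) * ∏ c, g c ω ≤ (∑ c, exp (a c) * g c ω ^ m) / m := by
    intro ω
    have key := prod_le_sum_pow_div hm (fun c => exp (a c / m) * g c ω)
      fun c => mul_nonneg (exp_pos _).le (hg c ω)
    have e : ∀ c, (exp (a c / m) * g c ω) ^ m = exp (a c) * g c ω ^ m := fun c => by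
      rw [mul_pow, ← exp_nat_mul, mul_div_cancel₀ _ hm']
    rwa [prod_mul_distrib, ← exp_sum, ← sum_div, Finset.sum_congr rfl fun c _ => e c] at key
  have hsum : exp ((∑ c, a c) / m) * ∑ ω, q ω * ∏ c, g c ω ≤ 1 := calc
    _ = ∑ ω, q ω * (exp ((∑ c, a c) / m) * ∏ c, g c ω) := by
        rw [mul_sum]; exact sum_congr rfl fun ω _ => by ring
    _ ≤ ∑ ω, q ω * ((∑ c, exp (a c) * g c ω ^ m) / m) :=
        sum_le_sum fun ω _ => mul_le_mul_of_nonneg_left (hpt ω) (hq ω)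
    _ = (∑ c, exp (a c) * ∑ ω, q ω * g c ω ^ m) / m := by
        simp_rw [mul_div_assoc', ← sum_div, mul_sum]
        rw [sum_comm]; congr 1
        exact sum_congr rfl fun c _ => sum_congr rfl fun ω _ => by ring
    _ ≤ (∑ _c : Fin m, (1 : ℝ)) / m := by
        gcongr with c
        calc exp (a c) * ∑ ω, q ω * g c ω ^ m ≤ exp (a c) * exp (-a c) := by gcongr; exact hga c
          _ = 1 := by rw [← exp_add, add_neg_cancel, exp_zero]
    _ = 1 := by simp [hm']
  rw [neg_div, exp_neg, ← one_div, le_div_iff₀ (exp_pos _), mul_comm]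
  exact hsum

lemma exp_neg_half_le_one_sub_quarter {z : ℝ} (hz0 : 0 ≤ z) (hz1 : z ≤ 1) :
    exp (-(z / 2)) ≤ 1 - z / 4 := by
  have h := abs_exp_sub_one_sub_id_le (x := -(z / 2)) (by rw [abs_le]; constructor <;> linarith)
  nlinarith [(abs_le.1 h).2]

lemma pow_le_one_div_of_four_mul_log_le {y s : ℝ} (hy : 0 < y) (hs0 : 0 ≤ s) (hs : s ≤ 1 / 2)
    {R : ℕ} (hR : 4 * log y ≤ R) : s ^ R ≤ 1 / y := by
  have h2R : y ≤ 2 ^ R := calc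
    y = exp (log y) := (exp_log hy).symm
    _ ≤ exp (R * log 2) := exp_le_exp.2 (by nlinarith [log_two_gt_d9])
    _ = 2 ^ R := by rw [exp_nat_mul, exp_log two_pos]
  calc s ^ R ≤ (1 / 2) ^ R := pow_le_pow_left₀ hs0 hs R
    _ = 1 / 2 ^ R := by rw [div_pow, one_pow]
    _ ≤ 1 / y := one_div_le_one_div_of_le hy h2R

lemma mul_exp_neg_two_mul_log_le {k y : ℝ} (hy : 3 ≤ y) (hk : k ≤ y / 4) :
    k * exp (-(2 * log y)) ≤ 1 / 12 := by
  have hy0 : 0 < y := by linarith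
  rw [show -(2 * log y) = -log y - log y by ring, exp_sub, exp_neg, exp_log hy0]
  calc k * (y⁻¹ / y) ≤ y / 4 * (y⁻¹ / y) := by gcongr
    _ = 1 / (4 * y) := by field_simp
    _ ≤ 1 / 12 := by gcongr; linarith

section FiniteProbability

variable {Ω : Type*} [Fintype Ω] {q : Ω → ℝ}

lemma mul_sum_filter_lt_le_sum_mul (hq : ∀ ω, 0 ≤ q ω) {f : Ω → ℝ} (hf : ∀ ω, 0 ≤ f ω)
    (c : ℝ) : c * ∑ ω with c < f ω, q ω ≤ ∑ ω, q ω * f ω := by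
  rw [mul_sum]
  calc ∑ ω with c < f ω, c * q ω ≤ ∑ ω with c < f ω, q ω * f ω :=
        sum_le_sum fun ω hω => by
          rw [mul_comm]; exact mul_le_mul_of_nonneg_left (mem_filter.1 hω).2.le (hq ω)
    _ ≤ ∑ ω, q ω * f ω :=
        sum_le_sum_of_subset_of_nonneg (filter_subset _ _) fun ω _ _ => mul_nonneg (hq ω) (hf ω)

lemma sum_filter_or_le (hq : ∀ ω, 0 ≤ q ω) (P Q : Ω → Prop) [DecidablePred P]
    [DecidablePred Q] : ∑ ω with P ω ∨ Q ω, q ω ≤ ∑ ω with P ω, q ω + ∑ ω with Q ω, q ω := by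
  rw [filter_or, ← sum_union_inter]
  exact le_add_of_nonneg_right (sum_nonneg fun ω _ => hq ω)

lemma sum_filter_exists_le {ι : Type*} [Fintype ι] (hq : ∀ ω, 0 ≤ q ω) (P : ι → Ω → Prop)
    [∀ i, DecidablePred (P i)] [DecidablePred fun ω => ∃ i, P i ω] :
    ∑ ω with ∃ i, P i ω, q ω ≤ ∑ i, ∑ ω with P i ω, q ω := by
  have hite : ∀ i ω, 0 ≤ if P i ω then q ω else 0 := fun i ω => by split_ifs <;> simp [hq]
  simp_rw [sum_filter]
  rw [sum_comm]
  refine sum_le_sum fun ω _ => ?_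
  split_ifs with h
  · obtain ⟨i, hi⟩ := h
    calc q ω = if P i ω then q ω else 0 := (if_pos hi).symm
      _ ≤ _ := single_le_sum (f := fun i => if P i ω then q ω else 0) (fun i _ => hite i ω)
          (mem_univ i)
  · exact sum_nonneg fun i _ => hite i ω

lemma sum_filter_exists_prod (hq : ∑ ω, q ω = 1) (A : Ω → Prop) [DecidablePred A] (R : ℕ) :
    ∑ a : Fin R → Ω with ∃ r, A (a r), ∏ r, q (a r) = 1 - (∑ ω with ¬ A ω, q ω) ^ R := by
  have htot : ∑ a : Fin R → Ω, ∏ r, q (a r) = 1 := by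
    rw [← Fintype.prod_sum]; simp [hq]
  have hbad : ∑ a : Fin R → Ω with ¬ ∃ r, A (a r), ∏ r, q (a r) =
      (∑ ω with ¬ A ω, q ω) ^ R := by
    rw [← Fin.prod_const, prod_univ_sum]
    congr 1
    ext a
    simp [Fintype.mem_piFinset]
  rw [← htot, ← sum_filter_add_sum_filter_not univ (fun a : Fin R → Ω => ∃ r, A (a r)), hbad]
  ring

end FiniteProbability

theorem SimpleGraph.colorable_of_forall_degree_lt {V : Type*} [Fintype V] (G : SimpleGraph V)
    [DecidableRel G.Adj] {m : ℕ} (h : ∀ v, G.degree v < m) : G.Colorable m := by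
  suffices ∀ s : Finset V, ∃ col : V → Fin m, ∀ x ∈ s, ∀ y ∈ s, G.Adj x y → col x ≠ col y by
    obtain ⟨col, hcol⟩ := this univ
    exact ⟨Coloring.mk col fun hxy => hcol _ (mem_univ _) _ (mem_univ _) hxy⟩
  intro s
  induction s using Finset.induction_on with
  | empty => exact ⟨fun v => ⟨0, (Nat.zero_le _).trans_lt (h v)⟩, by simp⟩
  | insert v s hv ih =>
    obtain ⟨col, hcol⟩ := ih
    obtain ⟨c, hc⟩ : ∃ c, c ∉ (G.neighborFinset v).image col := by
      by_contra! hall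
      have := (card_le_card (s := univ) fun c _ => hall c).trans card_image_le
      simp only [card_univ, Fintype.card_fin, card_neighborFinset_eq_degree] at this
      exact (h v).not_ge this
    have hv' : ∀ w, G.Adj v w → col w ≠ c := fun w hw hwc =>
      hc (mem_image.2 ⟨w, (G.mem_neighborFinset v w).2 hw, hwc⟩)
    have hs : ∀ {u}, u ∈ insert v s → u ≠ v → u ∈ s := fun hu huv =>
      (mem_insert.1 hu).resolve_left huv
    refine ⟨Function.update col v c, fun x hx y hy hxy => ?_⟩
    simp only [Function.update_apply]
    split_ifs with hxv hyv hyv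
    · exact absurd (hxv ▸ hyv ▸ hxy) G.irrefl
    · subst hxv; exact (hv' y hxy).symm
    · subst hyv; exact hv' x hxy.symm
    · exact hcol x (hs hx hxv) y (hs hy hyv) hxy

lemma exists_coloring_disjoint_of_card_le {S T : Type*} [Fintype S] [DecidableEq T]
    {t : S → Finset T} {Δ : ℕ} (hΔ : ∀ i, #{i' | (t i ∩ t i').Nonempty} ≤ Δ) :
    ∃ col : S → Fin (Δ + 1), ∀ i i', i ≠ i' → col i = col i' → Disjoint (t i) (t i') := by
  let G := SimpleGraph.fromRel fun i i' : S => (t i ∩ t i').Nonempty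
  have hdeg : ∀ i, G.degree i < Δ + 1 := fun i => by
    rw [← G.card_neighborFinset_eq_degree, Nat.lt_succ_iff]
    refine (card_le_card fun i' hi' => ?_).trans (hΔ i)
    simp only [SimpleGraph.mem_neighborFinset, SimpleGraph.fromRel_adj, G] at hi'
    simp only [mem_filter, mem_univ, true_and]
    exact hi'.2.elim id fun h => by rwa [inter_comm]
  obtain ⟨c⟩ := G.colorable_of_forall_degree_lt hdeg
  refine ⟨c, fun i i' hii' hc => ?_⟩
  by_contra h
  exact c.valid ⟨hii', Or.inl (not_disjoint_iff_nonempty_inter.1 h)⟩ hc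

section PiWeight

variable {T κ : Type*} [Fintype T]

/-- The probability of `ω` when the coordinates `ω j` are independent with laws `w j`. -/
def piWeight (w : T → κ → ℝ) (ω : T → κ) : ℝ := ∏ j, w j (ω j)

variable {w : T → κ → ℝ}

lemma piWeight_nonneg (hw : ∀ j o, 0 ≤ w j o) (ω : T → κ) : 0 ≤ piWeight w ω :=
  prod_nonneg fun j _ => hw j (ω j)

variable [DecidableEq T] [Fintype κ]

lemma sum_piWeight_mul_prod (hw : ∀ j, ∑ o, w j o = 1) (U : Finset T) (f : T → κ → ℝ) :
    ∑ ω, piWeight w ω * ∏ j ∈ U, f j (ω j) = ∏ j ∈ U, ∑ o, w j o * f j o := by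
  have hU : ∀ j, ∑ o, w j o * (if j ∈ U then f j o else 1) =
      if j ∈ U then ∑ o, w j o * f j o else 1 := by
    intro j; split_ifs <;> simp [hw]
  calc ∑ ω, piWeight w ω * ∏ j ∈ U, f j (ω j)
      = ∑ ω : T → κ, ∏ j, w j (ω j) * (if j ∈ U then f j (ω j) else 1) := by
        simp only [piWeight, prod_mul_distrib, prod_ite_mem, univ_inter]
    _ = ∏ j, ∑ o, w j o * (if j ∈ U then f j o else 1) := by rw [Fintype.prod_sum]
    _ = ∏ j ∈ U, ∑ o, w j o * f j o := by
        simp only [hU, prod_ite_mem, univ_inter]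

lemma sum_piWeight (hw : ∀ j, ∑ o, w j o = 1) : ∑ ω, piWeight w ω = 1 := by
  simpa using sum_piWeight_mul_prod hw ∅ fun _ _ => 1

lemma sum_piWeight_mul_apply (hw : ∀ j, ∑ o, w j o = 1) (j : T) (g : κ → ℝ) :
    ∑ ω, piWeight w ω * g (ω j) = ∑ o, w j o * g o := by
  simpa using sum_piWeight_mul_prod hw {j} fun _ => g

lemma sum_piWeight_mul_prod_add_mul_prod {ι : Type*} {V : Finset ι} {t : ι → Finset T}
    (hw : ∀ j, ∑ o, w j o = 1) (ht : (V : Set ι).PairwiseDisjoint t) (a b : ℝ)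
    (f : T → κ → ℝ) :
    ∑ ω, piWeight w ω * ∏ i ∈ V, (a + b * ∏ j ∈ t i, f j (ω j)) =
      ∏ i ∈ V, (a + b * ∏ j ∈ t i, ∑ o, w j o * f j o) := by
  simp_rw [prod_add_mul_prod_eq_sum_powerset ht, mul_sum]
  rw [sum_comm]
  refine sum_congr rfl fun U _ => ?_
  simp_rw [mul_left_comm (piWeight w _), ← mul_sum, sum_piWeight_mul_prod hw]

end PiWeight

section Coverage

variable {S T κ : Type*} (H : κ → Prop) [DecidablePred H] (t : S → Finset T)

lemma exp_neg_log_two_mul_card_filter (V : Finset S) (ω : T → κ) :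
    exp (-(log 2 * #{i ∈ V | ∃ j ∈ t i, H (ω j)})) =
      ∏ i ∈ V, (1 / 2 + 1 / 2 * ∏ j ∈ t i, if H (ω j) then 0 else 1) := by
  rw [mul_comm, ← mul_neg, exp_nat_mul, exp_neg, exp_log two_pos, ← prod_const, prod_filter]
  refine prod_congr rfl fun i _ => ?_
  simp only [← ite_not (H _), prod_boole]
  by_cases hcov : ∃ j ∈ t i, H (ω j)
  · have : ¬ ∀ j ∈ t i, ¬ H (ω j) := by simpa using hcov
    rw [if_pos hcov, if_neg this]; norm_num
  · have : ∀ j ∈ t i, ¬ H (ω j) := by simpa using hcov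
    rw [if_neg hcov, if_pos this]; norm_num

variable [Fintype T] [DecidableEq T] [Fintype κ] {w : T → κ → ℝ}

noncomputable def coverProb (w : T → κ → ℝ) (i : S) : ℝ :=
  1 - ∏ j ∈ t i, ∑ o with ¬ H o, w j o

lemma sum_piWeight_mul_exp_neg_log_two_mul_card_le (hw0 : ∀ j o, 0 ≤ w j o)
    (hw : ∀ j, ∑ o, w j o = 1) {V : Finset S} (ht : (V : Set S).PairwiseDisjoint t) :
    ∑ ω, piWeight w ω * exp (-(log 2 * #{i ∈ V | ∃ j ∈ t i, H (ω j)})) ≤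
      exp (-∑ i ∈ V, coverProb H t w i / 2) := by
  have hmiss : ∀ j, ∑ o, w j o * (if H o then 0 else 1) = ∑ o with ¬ H o, w j o := fun j => by
    simp [sum_filter, mul_ite, ite_not]
  have h := sum_piWeight_mul_prod_add_mul_prod hw ht (1 / 2) (1 / 2)
    fun _ o => if H o then 0 else 1
  simp only [hmiss] at h
  simp_rw [exp_neg_log_two_mul_card_filter, h, ← sum_neg_distrib, exp_sum]
  refine prod_le_prod (fun i _ => ?_) fun i _ => ?_
  · have := prod_nonneg fun j (_ : j ∈ t i) =>
      sum_nonneg fun o (_ : o ∈ ({o | ¬ H o} : Finset κ)) => hw0 j o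
    positivity
  · have := one_sub_le_exp_neg (coverProb H t w i / 2)
    simp only [coverProb] at this ⊢
    linarith

lemma sum_piWeight_mul_exp_neg_card_le_of_coloring (hw0 : ∀ j o, 0 ≤ w j o)
    (hw : ∀ j, ∑ o, w j o = 1) {V : Finset S} {m : ℕ} (hm : 0 < m) (col : S → Fin m)
    (hcol : ∀ i ∈ V, ∀ i' ∈ V, i ≠ i' → col i = col i' → Disjoint (t i) (t i')) :
    ∑ ω, piWeight w ω * exp (-(log 2 / m * #{i ∈ V | ∃ j ∈ t i, H (ω j)})) ≤
      exp (-(∑ i ∈ V, coverProb H t w i / 2) / m) := by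
  have hm' : (m : ℝ) ≠ 0 := by positivity
  set Z : Fin m → (T → κ) → ℝ := fun c ω => #{i ∈ {i ∈ V | col i = c} | ∃ j ∈ t i, H (ω j)}
  have hclass : ∀ c, ∑ ω, piWeight w ω * exp (-(log 2 / m * Z c ω)) ^ m ≤
      exp (-∑ i ∈ V with col i = c, coverProb H t w i / 2) := by
    intro c
    have hdisj : (({i ∈ V | col i = c} : Finset S) : Set S).PairwiseDisjoint t :=
      fun i hi i' hi' hii' => by
        simp only [coe_filter, Set.mem_ofPred_eq] at hi hi'
        exact hcol i hi.1 i' hi'.1 hii' (hi.2.trans hi'.2.symm)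
    have e : ∀ ω, exp (-(log 2 / m * Z c ω)) ^ m = exp (-(log 2 * Z c ω)) := fun ω => by
      rw [← exp_nat_mul]; congr 1; field_simp
    simp_rw [e]
    exact sum_piWeight_mul_exp_neg_log_two_mul_card_le H t hw0 hw hdisj
  have := sum_mul_prod_le_exp_of_sum_mul_pow_le hm (piWeight_nonneg hw0)
    (fun c ω => (exp_pos _).le) hclass
  rw [sum_fiberwise] at this
  convert this using 3 with ω
  rw [← exp_sum, sum_neg_distrib, ← mul_sum]
  simp only [Z, natCast_card_filter, sum_fiberwise]

theorem sum_piWeight_filter_card_lt_le (hw0 : ∀ j o, 0 ≤ w j o) (hw : ∀ j, ∑ o, w j o = 1)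
    {V : Finset S} {m : ℕ} (hm : 0 < m) (col : S → Fin m)
    (hcol : ∀ i ∈ V, ∀ i' ∈ V, i ≠ i' → col i = col i' → Disjoint (t i) (t i')) (θ : ℝ) :
    ∑ ω with (#{i ∈ V | ∃ j ∈ t i, H (ω j)} : ℝ) < θ, piWeight w ω ≤
      exp ((log 2 * θ - ∑ i ∈ V, coverProb H t w i / 2) / m) := by
  set lam := log 2 / m with hlam
  have hlam0 : 0 < lam := div_pos (log_pos one_lt_two) (by positivity)
  set Y : (T → κ) → ℝ := fun ω => #{i ∈ V | ∃ j ∈ t i, H (ω j)}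
  have hmarkov := mul_sum_filter_lt_le_sum_mul (piWeight_nonneg hw0)
    (fun ω => (exp_pos (-(lam * Y ω))).le) (exp (-(lam * θ)))
  have hevent : ∀ ω, exp (-(lam * θ)) < exp (-(lam * Y ω)) ↔ Y ω < θ := fun ω => by
    rw [exp_lt_exp, neg_lt_neg_iff, mul_lt_mul_iff_right₀ hlam0]
  simp_rw [hevent] at hmarkov
  rw [← le_div_iff₀' (exp_pos _), div_eq_mul_inv, ← exp_neg, neg_neg] at hmarkov
  calc _ ≤ (∑ ω, piWeight w ω * exp (-(lam * Y ω))) * exp (lam * θ) := hmarkov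
    _ ≤ exp (-(∑ i ∈ V, coverProb H t w i / 2) / m) * exp (lam * θ) := by
        gcongr; exact sum_piWeight_mul_exp_neg_card_le_of_coloring H t hw0 hw hm col hcol
    _ = _ := by rw [← exp_add, hlam]; ring_nf

end Coverage

namespace MinConCD

variable {S T : Type*} {k : ℕ}

/-- The law of the cluster to which a round assigns tag `j`; `none` leaves the tag unused. -/
noncomputable def tagWeight (x : Fin k → T → ℝ) (j : T) (o : Option (Fin k)) : ℝ :=
  o.elim (1 - (∑ ℓ, x ℓ j) / 2) fun ℓ => x ℓ j / 2

variable {x : Fin k → T → ℝ}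

@[simp] lemma tagWeight_none (j : T) : tagWeight x j none = 1 - (∑ ℓ, x ℓ j) / 2 := rfl

@[simp] lemma tagWeight_some (j : T) (ℓ : Fin k) : tagWeight x j (some ℓ) = x ℓ j / 2 := rfl

lemma tagWeight_nonneg (hx0 : ∀ ℓ j, 0 ≤ x ℓ j) (hone : ∀ j, ∑ ℓ, x ℓ j ≤ 1) (j : T) :
    ∀ o, 0 ≤ tagWeight x j o := by
  rintro (_ | ℓ)
  · rw [tagWeight_none]; linarith [hone j]
  · exact div_nonneg (hx0 ℓ j) two_pos.le

lemma sum_tagWeight (j : T) : ∑ o, tagWeight x j o = 1 := by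
  simp only [Fintype.sum_option, tagWeight_none, tagWeight_some, ← sum_div]; ring

lemma sum_tagWeight_ne_some (j : T) (ℓ : Fin k) :
    ∑ o with ¬ o = some ℓ, tagWeight x j o = 1 - x ℓ j / 2 := by
  rw [← sum_tagWeight (x := x) j, ← sum_filter_add_sum_filter_not univ (· = some ℓ),
    filter_eq' univ (some ℓ), if_pos (mem_univ _), sum_singleton, tagWeight_some]
  ring

lemma le_coverProb (hone : ∀ j, ∑ ℓ, x ℓ j ≤ 1) (hx0 : ∀ ℓ j, 0 ≤ x ℓ j) (t : S → Finset T)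
    {ℓ : Fin k} {i : S} {z : ℝ} (hz0 : 0 ≤ z) (hz1 : z ≤ 1) (hcov : z ≤ ∑ j ∈ t i, x ℓ j) :
    z / 4 ≤ coverProb (· = some ℓ) t (tagWeight x) i := by
  have hx1 : ∀ j, x ℓ j ≤ 1 := fun j =>
    (single_le_sum (fun ℓ' _ => hx0 ℓ' j) (mem_univ ℓ)).trans (hone j)
  have hmiss : ∏ j ∈ t i, (1 - x ℓ j / 2) ≤ 1 - z / 4 := calc
    _ ≤ ∏ j ∈ t i, exp (-(x ℓ j / 2)) :=
        prod_le_prod (fun j _ => by linarith [hx1 j]) fun j _ => one_sub_le_exp_neg _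
    _ = exp (-((∑ j ∈ t i, x ℓ j) / 2)) := by rw [← exp_sum, sum_neg_distrib, sum_div]
    _ ≤ exp (-(z / 2)) := by gcongr
    _ ≤ 1 - z / 4 := exp_neg_half_le_one_sub_quarter hz0 hz1
  simp only [coverProb, sum_tagWeight_ne_some]
  linarith

lemma degree_mul_log_le_demand {a d c M L D : ℝ} (hL : 0 < L) (ha0 : 0 < a) (ha1 : a ≤ 1)
    (hc : 0 ≤ c) (hMa : a * c ≤ M) (hd : d ≤ a ^ 2 / 576) (hD : D ≤ d * c / L) :
    576 * D * L ≤ M := by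
  have hM0 : 0 ≤ M := (mul_nonneg ha0.le hc).trans hMa
  have := (le_div_iff₀ hL).1 hD
  nlinarith [mul_le_mul_of_nonneg_right hd hc, mul_le_mul_of_nonneg_left hMa ha0.le,
    mul_le_mul_of_nonneg_right ha1 hM0]

variable [Fintype T]

def IsAccepted (C : Fin k → Finset S) (t : S → Finset T) (M : Fin k → ℝ) (B : ℝ)
    (ω : T → Option (Fin k)) : Prop :=
  (∀ ℓ, M ℓ / 8 ≤ (#{i ∈ C ℓ | ∃ j ∈ t i, ω j = some ℓ} : ℝ)) ∧ (#{j | ω j ≠ none} : ℝ) ≤ 2 * B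

lemma sum_sum_pos_of_pos_demand {C : Finset S} {t : S → Finset T} {z : S → ℝ} {M : ℝ}
    {ℓ : Fin k} (hx0 : ∀ ℓ j, 0 ≤ x ℓ j) (hcov : ∀ i ∈ C, z i ≤ ∑ j ∈ t i, x ℓ j)
    (hM : M ≤ ∑ i ∈ C, z i) (hMpos : 0 < M) : 0 < ∑ ℓ, ∑ j, x ℓ j := by
  refine lt_of_lt_of_le ?_ (single_le_sum (fun ℓ _ => sum_nonneg fun j _ => hx0 ℓ j) (mem_univ ℓ))
  by_contra! h
  have hzero : ∀ j, x ℓ j = 0 := fun j =>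
    (sum_eq_zero_iff_of_nonneg fun j _ => hx0 ℓ j).1 (h.antisymm (sum_nonneg fun j _ => hx0 ℓ j))
      j (mem_univ j)
  have : ∑ i ∈ C, z i ≤ 0 := sum_nonpos fun i hi => (hcov i hi).trans (by simp [hzero])
  linarith

variable [DecidableEq T]

lemma sum_piWeight_mul_card_ne_none :
    ∑ ω, piWeight (tagWeight x) ω * (#{j | ω j ≠ none} : ℝ) = (∑ ℓ, ∑ j, x ℓ j) / 2 := by
  simp_rw [natCast_card_filter, mul_sum]
  rw [sum_comm]
  simp_rw [sum_piWeight_mul_apply sum_tagWeight _ (fun o => if o ≠ none then (1 : ℝ) else 0)]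
  simp [Fintype.sum_option, sum_div, sum_comm (γ := Fin k)]

lemma sum_piWeight_filter_cost_gt_le (hx0 : ∀ ℓ j, 0 ≤ x ℓ j) (hone : ∀ j, ∑ ℓ, x ℓ j ≤ 1)
    {B : ℝ} (hB : B = ∑ ℓ, ∑ j, x ℓ j) (hBpos : 0 < B) :
    ∑ ω with 2 * B < (#{j | ω j ≠ none} : ℝ), piWeight (tagWeight x) ω ≤ 1 / 4 := by
  have := mul_sum_filter_lt_le_sum_mul (piWeight_nonneg (tagWeight_nonneg hx0 hone))
    (fun ω => Nat.cast_nonneg #{j | ω j ≠ none}) (2 * B)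
  rw [sum_piWeight_mul_card_ne_none, ← hB] at this
  nlinarith

lemma sum_piWeight_filter_coverage_lt_le (hx0 : ∀ ℓ j, 0 ≤ x ℓ j)
    (hone : ∀ j, ∑ ℓ, x ℓ j ≤ 1) {C : Finset S} {t : S → Finset T} {z : S → ℝ} {ℓ : Fin k}
    {M : ℝ} (hz0 : ∀ i, 0 ≤ z i) (hz1 : ∀ i, z i ≤ 1) (hcov : ∀ i ∈ C, z i ≤ ∑ j ∈ t i, x ℓ j)
    (hM : M ≤ ∑ i ∈ C, z i) {m : ℕ} (hm : 0 < m) (col : S → Fin m)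
    (hcol : ∀ i i', i ≠ i' → col i = col i' → Disjoint (t i) (t i')) {L : ℝ} (hL : 0 ≤ L)
    (hML : 576 * m * L ≤ M) :
    ∑ ω with (#{i ∈ C | ∃ j ∈ t i, ω j = some ℓ} : ℝ) < M / 8, piWeight (tagWeight x) ω ≤
      exp (-(2 * L)) := by
  have hμ : M / 8 ≤ ∑ i ∈ C, coverProb (· = some ℓ) t (tagWeight x) i / 2 := calc
    M / 8 ≤ ∑ i ∈ C, z i / 4 / 2 := by rw [← sum_div, ← sum_div]; linarith
    _ ≤ _ := sum_le_sum fun i hi => by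
        gcongr; exact le_coverProb hone hx0 t (hz0 i) (hz1 i) (hcov i hi)
  refine (sum_piWeight_filter_card_lt_le (· = some ℓ) t (tagWeight_nonneg hx0 hone)
    sum_tagWeight hm col (fun i _ i' _ => hcol i i') (M / 8)).trans (exp_le_exp.2 ?_)
  have hm' : (0 : ℝ) < m := by exact_mod_cast hm
  rw [div_le_iff₀ hm']
  have hM0 : 0 ≤ M := le_trans (by positivity) hML
  -- the exponent is at most `(log 2 - 1) M / (8 m) ≤ -72 (1 - log 2) L`, and `72 (1 - log 2) ≥ 2`
  nlinarith [log_two_lt_d9, mul_le_mul_of_nonneg_right log_two_lt_d9.le hM0]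

lemma sum_piWeight_filter_not_isAccepted_le (hx0 : ∀ ℓ j, 0 ≤ x ℓ j)
    (hone : ∀ j, ∑ ℓ, x ℓ j ≤ 1) {C : Fin k → Finset S} {t : S → Finset T} {z : S → ℝ}
    {M : Fin k → ℝ} {B : ℝ} (hz0 : ∀ i, 0 ≤ z i) (hz1 : ∀ i, z i ≤ 1)
    (hcov : ∀ ℓ, ∀ i ∈ C ℓ, z i ≤ ∑ j ∈ t i, x ℓ j) (hM : ∀ ℓ, M ℓ ≤ ∑ i ∈ C ℓ, z i)
    (hB : B = ∑ ℓ, ∑ j, x ℓ j) (hBpos : 0 < B) {m : ℕ} (hm : 0 < m) (col : S → Fin m)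
    (hcol : ∀ i i', i ≠ i' → col i = col i' → Disjoint (t i) (t i')) {L : ℝ} (hL : 0 ≤ L)
    (hML : ∀ ℓ, 576 * m * L ≤ M ℓ) :
    ∑ ω with ¬ IsAccepted C t M B ω, piWeight (tagWeight x) ω ≤ 1 / 4 + k * exp (-(2 * L)) := by
  have hq := piWeight_nonneg (tagWeight_nonneg hx0 hone)
  have hrej : ∀ ω, ¬ IsAccepted C t M B ω ↔ 2 * B < (#{j | ω j ≠ none} : ℝ) ∨
      ∃ ℓ, (#{i ∈ C ℓ | ∃ j ∈ t i, ω j = some ℓ} : ℝ) < M ℓ / 8 := fun ω => by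
    simp only [IsAccepted, not_and_or, not_forall, not_le, or_comm]
  calc _ = ∑ ω with 2 * B < (#{j | ω j ≠ none} : ℝ) ∨
        ∃ ℓ, (#{i ∈ C ℓ | ∃ j ∈ t i, ω j = some ℓ} : ℝ) < M ℓ / 8, piWeight (tagWeight x) ω :=
        sum_congr (filter_congr fun ω _ => hrej ω) fun _ _ => rfl
    _ ≤ 1 / 4 + ∑ _ℓ : Fin k, exp (-(2 * L)) := by
        refine (sum_filter_or_le hq _ _).trans
          (add_le_add ?_ ((sum_filter_exists_le hq _).trans (sum_le_sum fun ℓ _ => ?_)))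
        · exact sum_piWeight_filter_cost_gt_le hx0 hone hB hBpos
        · exact sum_piWeight_filter_coverage_lt_le hx0 hone hz0 hz1 (hcov ℓ) (hM ℓ) hm col hcol
            hL (hML ℓ)
    _ = 1 / 4 + k * exp (-(2 * L)) := by simp

end MinConCD

theorem stmt5 {S T : Type*} [Fintype S] [Fintype T] [DecidableEq T]
    {k : ℕ} (C : Fin k → Finset S) (t : S → Finset T)
    (M : Fin k → ℝ) (x : Fin k → T → ℝ) (z : S → ℝ) (B : ℝ)
    (hpart : ∀ i : S, ∃! ℓ : Fin k, i ∈ C ℓ)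
    (hx0 : ∀ ℓ j, 0 ≤ x ℓ j)
    (hz0 : ∀ i, 0 ≤ z i) (hz1 : ∀ i, z i ≤ 1)
    (hcov : ∀ ℓ, ∀ i ∈ C ℓ, z i ≤ ∑ j ∈ t i, x ℓ j)
    (hM : ∀ ℓ, M ℓ ≤ ∑ i ∈ C ℓ, z i)
    (hone : ∀ j, ∑ ℓ, x ℓ j ≤ 1)
    (hB : B = ∑ ℓ, ∑ j, x ℓ j)
    (a0 : ℝ) (ha0 : 0 < a0) (ha1 : a0 ≤ 1)
    (hMa : ∀ ℓ : Fin k, a0 * ((C ℓ).card : ℝ) ≤ M ℓ)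
    (d : ℝ) (hd : d ≤ a0 ^ 2 / 576)
    (Δ : ℕ)
    (hΔ : ∀ i : S, ((Finset.univ.filter fun i' : S => (t i ∩ t i').Nonempty).card ≤ Δ))
    (hn : 3 ≤ Fintype.card S)
    (hΔb : ∀ ℓ : Fin k,
      ((Δ : ℝ) + 1) ≤ d * ((C ℓ).card : ℝ) / Real.log (Fintype.card S))
    (hk : (k : ℝ) ≤ (Fintype.card S : ℝ) / 4)
    (R : ℕ) (hR : 4 * Real.log (Fintype.card S) ≤ (R : ℝ))
    (prob : (Fin R → T → Option (Fin k)) → ℝ)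
    (hprob : ∀ a, prob a =
      ∏ r, ∏ j, (match a r j with
        | some ℓ' => x ℓ' j / 2
        | none => 1 - (∑ ℓ', x ℓ' j) / 2)) :
    1 - 1 / (Fintype.card S : ℝ) ≤
      ∑ a ∈ Finset.univ.filter (fun a : Fin R → T → Option (Fin k) =>
        ∃ r : Fin R,
          (∀ ℓ : Fin k,
            M ℓ / 8 ≤ (((C ℓ).filter fun i => ∃ j ∈ t i, a r j = some ℓ).card : ℝ))
          ∧ ((Finset.univ.filter fun j : T => a r j ≠ none).card : ℝ) ≤ 2 * B),
        prob a := by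
  have hn0 : (0 : ℝ) < Fintype.card S := by positivity
  have hL : 0 < log (Fintype.card S) := log_pos (by exact_mod_cast (by omega : 1 < Fintype.card S))
  have hML : ∀ ℓ, 576 * ((Δ + 1 : ℕ) : ℝ) * log (Fintype.card S) ≤ M ℓ := fun ℓ =>
    MinConCD.degree_mul_log_le_demand hL ha0 ha1 (Nat.cast_nonneg _) (hMa ℓ) hd
      (by push_cast; exact hΔb ℓ)
  obtain ⟨ℓ0⟩ : Nonempty (Fin k) := by
    obtain ⟨i⟩ := Fintype.card_pos_iff.1 (by omega : 0 < Fintype.card S)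
    exact ⟨(hpart i).exists.choose⟩
  have hBpos : 0 < B := hB ▸ MinConCD.sum_sum_pos_of_pos_demand hx0 (hcov ℓ0) (hM ℓ0)
    ((by positivity : (0 : ℝ) < 576 * ((Δ + 1 : ℕ) : ℝ) * log (Fintype.card S)).trans_le (hML ℓ0))
  obtain ⟨col, hcol⟩ := exists_coloring_disjoint_of_card_le hΔ
  have hround := MinConCD.sum_piWeight_filter_not_isAccepted_le hx0 hone hz0 hz1 hcov hM hB hBpos
    (Nat.succ_pos Δ) col hcol hL.le hML
  have hk' := mul_exp_neg_two_mul_log_le (by exact_mod_cast hn) hk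
  have hprob' : ∀ a, prob a = ∏ r, piWeight (MinConCD.tagWeight x) (a r) := fun a => by
    rw [hprob a]
    exact prod_congr rfl fun r _ => prod_congr rfl fun j _ => by cases a r j <;> rfl
  calc 1 - 1 / (Fintype.card S : ℝ)
      ≤ 1 - (∑ ω with ¬ MinConCD.IsAccepted C t M B ω, piWeight (MinConCD.tagWeight x) ω) ^ R :=
        sub_le_sub_left (pow_le_one_div_of_four_mul_log_le hn0
          (sum_nonneg fun ω _ => piWeight_nonneg (MinConCD.tagWeight_nonneg hx0 hone) ω)
          (by linarith) hR) 1
    _ = ∑ a : Fin R → T → Option (Fin k) with ∃ r, MinConCD.IsAccepted C t M B (a r),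
          ∏ r, piWeight (MinConCD.tagWeight x) (a r) :=
        (sum_filter_exists_prod (sum_piWeight MinConCD.sum_tagWeight) _ R).symm
    _ = _ := by exact sum_congr (filter_congr fun a _ => Iff.rfl) fun a _ => (hprob' a).symm
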